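/- Let z̃ : [0,2] → ℝ be defined by z̃(t) = 0 for t ∈ [0,1] and z̃(t) = 1/2 for t ∈ (1,2], let R(z) = |z|, and let I(t,z) = (1/2)z² − z (corresponding to the zero load ℓ ≡ 0). Then for every t₂ ∈ (1,2]: I(t₂, z̃(t₂)) + Diss_R(z̃; [0,t₂]) = 1/8 > 0 = I(0, z̃(0)). In particular, z̃ violates the energy inequality required of a local solution of the rate-independent system with ℓ ≡ 0 (for which the load term on the right-hand side vanishes), so z̃ is not a local solution. (Inequality (4.37), Section 4.2) -/

import Mathlib

/-! On `[0, t₂]` the function `z̃` is monotone, so the `|·|`-dissipation of every partition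
telescopes to the total increment `z̃(t₂) - z̃(0) = 1/2`. Hence
`I(z̃(t₂)) + Diss = (1/8 - 1/2) + 1/2 = 1/8`, which exceeds `I(z̃(0)) = 0`. -/

open MeasureTheory Set Filter
open scoped Topology

noncomputable section

/-- The R-dissipation of `z` on `[a,b]`: supremum over all finite partitions
`a = ξ₀ < ξ₁ < … < ξ_n = b` of `∑ R(z(ξ_i) - z(ξ_{i-1}))`. -/
def Diss {X : Type*} [NormedAddCommGroup X] (R : X → ℝ) (z : ℝ → X) (a b : ℝ) : ℝ :=
  sSup {v : ℝ | ∃ (n : ℕ) (ξ : Fin (n + 1) → ℝ), StrictMono ξ ∧ ξ 0 = a ∧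
    ξ (Fin.last n) = b ∧ v = ∑ i : Fin n, R (z (ξ i.succ) - z (ξ i.castSucc))}

/-- The energy `I(t,z) = z²/2 - z` corresponding to the zero load. -/
def En1 (z : ℝ) : ℝ := (1 / 2) * z ^ 2 - z

/-- The pointwise limit `z̃` of the differential solutions in (4.36). -/
def ztilde (t : ℝ) : ℝ := if t ≤ 1 then 0 else 1 / 2

theorem Fin.sum_succ_sub_castSucc {M : Type*} [AddCommGroup M] :
    ∀ {n : ℕ} (f : Fin (n + 1) → M),
      ∑ i : Fin n, (f i.succ - f i.castSucc) = f (Fin.last n) - f 0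
  | 0, _ => by simp
  | n + 1, f => by
    rw [Fin.sum_univ_castSucc]
    simp only [Fin.succ_castSucc]
    rw [Fin.sum_succ_sub_castSucc (fun i => f i.castSucc), Fin.castSucc_zero, Fin.succ_last]
    abel

theorem Monotone.sum_abs_succ_sub_castSucc {α : Type*} [AddCommGroup α] [LinearOrder α]
    [IsOrderedAddMonoid α] {n : ℕ} {f : Fin (n + 1) → α} (hf : Monotone f) :
    ∑ i : Fin n, |f i.succ - f i.castSucc| = f (Fin.last n) - f 0 := by
  rw [← Fin.sum_succ_sub_castSucc]
  exact Finset.sum_congr rfl fun i _ =>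
    abs_of_nonneg (sub_nonneg.2 (hf (Fin.castSucc_le_succ i)))

theorem Monotone.diss_abs_eq {z : ℝ → ℝ} (hz : Monotone z) {a b : ℝ} (hab : a < b) :
    Diss (fun w : ℝ => |w|) z a b = z b - z a := by
  unfold Diss
  refine (congrArg sSup ?_).trans (csSup_singleton (z b - z a))
  refine eq_singleton_iff_unique_mem.2 ⟨?_, ?_⟩
  · refine ⟨1, ![a, b], ?_, rfl, rfl, ?_⟩
    · simpa [Fin.strictMono_iff_lt_succ] using hab
    · simp [abs_of_nonneg (sub_nonneg.2 (hz hab.le))]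
  · rintro _ ⟨n, ξ, hξ, rfl, rfl, rfl⟩
    exact (hz.comp hξ.monotone).sum_abs_succ_sub_castSucc

theorem ztilde_monotone : Monotone ztilde := by
  intro s t hst
  unfold ztilde
  split_ifs with hs ht ht <;> norm_num
  exact hs (hst.trans ht)

theorem ztilde_of_le_one {t : ℝ} (ht : t ≤ 1) : ztilde t = 0 := if_pos ht

theorem ztilde_of_one_lt {t : ℝ} (ht : 1 < t) : ztilde t = 1 / 2 := if_neg ht.not_ge

theorem En1_ztilde_zero : En1 (ztilde 0) = 0 := by
  norm_num [ztilde_of_le_one, En1]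

theorem En1_add_diss_ztilde {t : ℝ} (ht : 1 < t) :
    En1 (ztilde t) + Diss (fun z : ℝ => |z|) ztilde 0 t = 1 / 8 := by
  rw [ztilde_monotone.diss_abs_eq (by linarith), ztilde_of_one_lt ht,
    ztilde_of_le_one zero_le_one]
  norm_num [En1]

/-- **Inequality (4.37), Section 4.2.** The limit `z̃` violates the energy inequality of a
local solution for the zero load: for every `t₂ ∈ (1,2]`,
`I(t₂, z̃(t₂)) + Diss(z̃;[0,t₂]) = 1/8 > 0 = I(0, z̃(0))`; hence `z̃` is not a local
solution. -/
theorem ztilde_not_local_solution :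
    (∀ t₂ ∈ Ioc (1 : ℝ) 2,
      En1 (ztilde t₂) + Diss (fun z : ℝ => |z|) ztilde 0 t₂ = 1 / 8) ∧
    En1 (ztilde 0) = 0 ∧ (0 : ℝ) < 1 / 8 ∧
    ¬ (∀ t₁ t₂ : ℝ, 0 ≤ t₁ → t₁ ≤ t₂ → t₂ ≤ 2 →
        En1 (ztilde t₂) + Diss (fun z : ℝ => |z|) ztilde t₁ t₂ ≤ En1 (ztilde t₁)) := by
  refine ⟨fun t ht => En1_add_diss_ztilde ht.1, En1_ztilde_zero, by norm_num, fun h => ?_⟩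
  have h02 := h 0 2 le_rfl zero_le_two le_rfl
  rw [En1_add_diss_ztilde one_lt_two, En1_ztilde_zero] at h02
  norm_num at h02

end
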